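/- arXiv:1604.05480 — 7 statements merged into one kernel-verified Lean document; each statement's English description precedes it below -/
import Mathlib

section
/- For all real numbers n₊ ≥ n₋ ≥ 0 with n₊ > 0, the diffusion coefficient of the second spin energy-transport model satisfies 1 ≤ (n₊ + n₋)( n₊^{7/3} + n₋^{7/3} ) / ( n₊^{5/3} + n₋^{5/3} )² ≤ 1.1. -/
/-- The diffusion coefficient `D(n₊,n₋) = (n₊+n₋)(n₊^{7/3}+n₋^{7/3})/(n₊^{5/3}+n₋^{5/3})²`
of the second spin energy-transport model satisfies `1 ≤ D ≤ 1.1`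
(`np = n₊`, `nm = n₋`). -/
theorem diffusion_coefficient_bounds (np nm : ℝ) (h0 : 0 ≤ nm) (h1 : nm ≤ np)
    (h2 : 0 < np) :
    1 ≤ (np + nm) * (np ^ ((7 : ℝ) / 3) + nm ^ ((7 : ℝ) / 3))
          / (np ^ ((5 : ℝ) / 3) + nm ^ ((5 : ℝ) / 3)) ^ 2 ∧
    (np + nm) * (np ^ ((7 : ℝ) / 3) + nm ^ ((7 : ℝ) / 3))
          / (np ^ ((5 : ℝ) / 3) + nm ^ ((5 : ℝ) / 3)) ^ 2 ≤ 1.1 := by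
  set a := np ^ ((1 : ℝ)/3) with ha_def
  set b := nm ^ ((1 : ℝ)/3) with hb_def
  have ha0 : 0 < a := Real.rpow_pos_of_pos h2 _
  have hb0 : 0 ≤ b := Real.rpow_nonneg h0 _
  have hab : b ≤ a := Real.rpow_le_rpow h0 h1 (by norm_num)
  have key : ∀ (x : ℝ) (hx : 0 ≤ x) (k : ℕ),
      x ^ ((k : ℝ)/3) = (x ^ ((1:ℝ)/3)) ^ k := by
    intro x hx k
    rw [← Real.rpow_natCast (x ^ ((1:ℝ)/3)) k, ← Real.rpow_mul hx]
    congr 1; ring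
  have e1 : np = a ^ 3 := by
    rw [← key np h2.le 3]; norm_num
  have e2 : nm = b ^ 3 := by
    rw [← key nm h0 3]; norm_num
  have e3 : np ^ ((7:ℝ)/3) = a ^ 7 := key np h2.le 7
  have e4 : nm ^ ((7:ℝ)/3) = b ^ 7 := key nm h0 7
  have e5 : np ^ ((5:ℝ)/3) = a ^ 5 := key np h2.le 5
  have e6 : nm ^ ((5:ℝ)/3) = b ^ 5 := key nm h0 5
  rw [e3, e4, e5, e6]
  nth_rewrite 1 [e1, e2]
  nth_rewrite 1 [e1, e2]
  have hden : 0 < (a ^ 5 + b ^ 5) ^ 2 := by positivity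
  constructor
  · rw [le_div_iff₀ hden]
    nlinarith [mul_nonneg (mul_nonneg (pow_nonneg hb0 3) (pow_nonneg hb0 0)) (sq_nonneg (a^2 - b^2)), pow_nonneg hb0 3, sq_nonneg (a^2-b^2), mul_nonneg (pow_nonneg hb0 3) (sq_nonneg (a^2-b^2)), mul_nonneg (mul_nonneg (pow_nonneg ha0.le 3) (pow_nonneg hb0 3)) (sq_nonneg (a^2-b^2))]
  · rw [div_le_iff₀ hden]
    have hc : 0 ≤ a - b := sub_nonneg.2 hab
    nlinarith [mul_nonneg (mul_nonneg (mul_nonneg (pow_nonneg hb0 5) (sq_nonneg (a-b))) (sq_nonneg (2*b-a))) (by nlinarith : (0:ℝ) ≤ b + 2*(a-b)),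
      mul_nonneg (mul_nonneg (mul_nonneg (pow_nonneg hb0 5) (sq_nonneg (a-b))) (sq_nonneg (a-2*b))) (by nlinarith : (0:ℝ) ≤ 2*b + (a-b)),
      mul_nonneg (pow_nonneg hb0 1) (pow_nonneg hc 9),
      mul_nonneg (pow_nonneg hb0 2) (pow_nonneg hc 8),
      mul_nonneg (pow_nonneg hb0 3) (pow_nonneg hc 7),
      mul_nonneg (pow_nonneg hb0 4) (pow_nonneg hc 6),
      mul_nonneg (pow_nonneg hb0 5) (pow_nonneg hc 5),
      mul_nonneg (pow_nonneg hb0 8) (pow_nonneg hc 2),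
      mul_nonneg (pow_nonneg hb0 9) (pow_nonneg hc 1),
      pow_nonneg hc 10, pow_nonneg hb0 10]
end

section
/- For all real numbers W₊ ≥ W₋ ≥ 0 with W₊ > 0, it holds that 1 ≤ ( W₊^{3/5} + W₋^{3/5} )( W₊^{7/5} + W₋^{7/5} ) / ( W₊ + W₋ )² ≤ 1.08. -/
/-- For `W₊ ≥ W₋ ≥ 0` with `W₊ > 0` (`Wp = W₊`, `Wm = W₋`):
`1 ≤ (W₊^{3/5}+W₋^{3/5})(W₊^{7/5}+W₋^{7/5})/(W₊+W₋)² ≤ 1.08`. -/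
theorem Z0_ratio_bounds (Wp Wm : ℝ) (h0 : 0 ≤ Wm) (h1 : Wm ≤ Wp) (h2 : 0 < Wp) :
    1 ≤ (Wp ^ ((3 : ℝ) / 5) + Wm ^ ((3 : ℝ) / 5))
          * (Wp ^ ((7 : ℝ) / 5) + Wm ^ ((7 : ℝ) / 5)) / (Wp + Wm) ^ 2 ∧
    (Wp ^ ((3 : ℝ) / 5) + Wm ^ ((3 : ℝ) / 5))
          * (Wp ^ ((7 : ℝ) / 5) + Wm ^ ((7 : ℝ) / 5)) / (Wp + Wm) ^ 2 ≤ 1.08 := by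
  set x : ℝ := Wp ^ ((1 : ℝ) / 5) with hx
  set y : ℝ := Wm ^ ((1 : ℝ) / 5) with hy
  have hxpos : 0 < x := Real.rpow_pos_of_pos h2 _
  have hynn : 0 ≤ y := Real.rpow_nonneg h0 _
  have e1 : Wp ^ ((3 : ℝ) / 5) = x ^ 3 := by
    rw [hx, ← Real.rpow_natCast (Wp ^ ((1:ℝ)/5)) 3, ← Real.rpow_mul h2.le]; norm_num
  have e2 : Wm ^ ((3 : ℝ) / 5) = y ^ 3 := by
    rw [hy, ← Real.rpow_natCast (Wm ^ ((1:ℝ)/5)) 3, ← Real.rpow_mul h0]; norm_num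
  have e3 : Wp ^ ((7 : ℝ) / 5) = x ^ 7 := by
    rw [hx, ← Real.rpow_natCast (Wp ^ ((1:ℝ)/5)) 7, ← Real.rpow_mul h2.le]; norm_num
  have e4 : Wm ^ ((7 : ℝ) / 5) = y ^ 7 := by
    rw [hy, ← Real.rpow_natCast (Wm ^ ((1:ℝ)/5)) 7, ← Real.rpow_mul h0]; norm_num
  have e5 : Wp = x ^ 5 := by
    rw [hx, ← Real.rpow_natCast (Wp ^ ((1:ℝ)/5)) 5, ← Real.rpow_mul h2.le]; norm_num
  have e6 : Wm = y ^ 5 := by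
    rw [hy, ← Real.rpow_natCast (Wm ^ ((1:ℝ)/5)) 5, ← Real.rpow_mul h0]; norm_num
  have e7 : (Wp + Wm) ^ 2 = (x ^ 5 + y ^ 5) ^ 2 := by rw [← e5, ← e6]
  rw [e1, e2, e3, e4, e7]
  have hden : (0 : ℝ) < (x ^ 5 + y ^ 5) ^ 2 := by positivity
  constructor
  · rw [le_div_iff₀ hden]
    nlinarith [sq_nonneg (x - y), sq_nonneg (x + y), mul_nonneg (mul_nonneg (pow_nonneg hxpos.le 3) (pow_nonneg hynn 3)) (sq_nonneg (x^2 - y^2)), hxpos.le, hynn]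
  · rw [div_le_iff₀ hden]
    have hxy : 0 ≤ x * y := mul_nonneg hxpos.le hynn
    nlinarith [sq_nonneg ((x - y)^5),
      mul_nonneg hxy (sq_nonneg ((x - y)^4)),
      sq_nonneg (x*y*(x - y)*((x - y)^2 - x*y/4)),
      mul_nonneg (pow_nonneg hxy 3) (sq_nonneg ((x - y)^2 - 87*(x*y)/352)),
      pow_nonneg hxy 5]
end

section
/- For all real numbers 0 < W₋ ≤ W₊, it holds that ( W₋^{−2/5} − W₊^{−2/5} )( W₊^{7/5} − W₋^{7/5} ) ≥ (14/25) (W₊ − W₋)² / W₊ ≥ (28/25) ((W₊ − W₋)/2)² / ((W₊ + W₋)/2). -/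
lemma mve_poly (a x : ℝ) (ha : 0 < a) (hx : 0 ≤ x) :
    14 * a ^ 2 * (a + x) ^ 2 * ((a + x) ^ 5 - a ^ 5) ^ 2
      ≤ 25 * ((a + x) ^ 2 - a ^ 2) * ((a + x) ^ 7 - a ^ 7) * (a + x) ^ 5 := by
  have key : 25 * ((a + x) ^ 2 - a ^ 2) * ((a + x) ^ 7 - a ^ 7) * (a + x) ^ 5
      - 14 * a ^ 2 * (a + x) ^ 2 * ((a + x) ^ 5 - a ^ 5) ^ 2
      = 875*a^11*x^3 + 5950*a^10*x^4 + 19250*a^9*x^5 + 39060*a^8*x^6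
        + 54915*a^7*x^7 + 55770*a^6*x^8 + 41470*a^5*x^9 + 22451*a^4*x^10
        + 8632*a^3*x^11 + 2236*a^2*x^12 + 350*a*x^13 + 25*x^14 := by ring
  nlinarith [key, mul_nonneg (pow_nonneg ha.le 11) (pow_nonneg hx 3),
    mul_nonneg (pow_nonneg ha.le 10) (pow_nonneg hx 4),
    mul_nonneg (pow_nonneg ha.le 9) (pow_nonneg hx 5),
    mul_nonneg (pow_nonneg ha.le 8) (pow_nonneg hx 6),
    mul_nonneg (pow_nonneg ha.le 7) (pow_nonneg hx 7),
    mul_nonneg (pow_nonneg ha.le 6) (pow_nonneg hx 8),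
    mul_nonneg (pow_nonneg ha.le 5) (pow_nonneg hx 9),
    mul_nonneg (pow_nonneg ha.le 4) (pow_nonneg hx 10),
    mul_nonneg (pow_nonneg ha.le 3) (pow_nonneg hx 11),
    mul_nonneg (pow_nonneg ha.le 2) (pow_nonneg hx 12),
    mul_nonneg ha.le (pow_nonneg hx 13), pow_nonneg hx 14]

lemma mve_key (a b : ℝ) (ha : 0 < a) (hab : a ≤ b) :
    14 * a ^ 2 * b ^ 2 * (b ^ 5 - a ^ 5) ^ 2
      ≤ 25 * (b ^ 2 - a ^ 2) * (b ^ 7 - a ^ 7) * b ^ 5 := by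
  obtain ⟨x, hx, rfl⟩ : ∃ x, 0 ≤ x ∧ b = a + x :=
    ⟨b - a, sub_nonneg.2 hab, by ring⟩
  exact mve_poly a x ha hx

/-- The mean-value-theorem estimate used in the entropy inequality for the second
spin energy-transport model (`Wp = W₊`, `Wm = W₋`, `0 < W₋ ≤ W₊`):
`(W₋^{−2/5} − W₊^{−2/5})(W₊^{7/5} − W₋^{7/5}) ≥ (14/25)(W₊−W₋)²/W₊
 ≥ (28/25)((W₊−W₋)/2)²/((W₊+W₋)/2)`. -/
theorem mean_value_estimate (Wp Wm : ℝ) (h0 : 0 < Wm) (h1 : Wm ≤ Wp) :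
    (14 / 25) * (Wp - Wm) ^ 2 / Wp
        ≤ (Wm ^ (-(2 : ℝ) / 5) - Wp ^ (-(2 : ℝ) / 5))
            * (Wp ^ ((7 : ℝ) / 5) - Wm ^ ((7 : ℝ) / 5)) ∧
    (28 / 25) * ((Wp - Wm) / 2) ^ 2 / ((Wp + Wm) / 2)
        ≤ (14 / 25) * (Wp - Wm) ^ 2 / Wp := by
  have hp : 0 < Wp := lt_of_lt_of_le h0 h1
  constructor
  · set a := Wm ^ ((1 : ℝ) / 5) with ha_def
    set b := Wp ^ ((1 : ℝ) / 5) with hb_def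
    have ha : 0 < a := Real.rpow_pos_of_pos h0 _
    have hb : 0 < b := Real.rpow_pos_of_pos hp _
    have hab : a ≤ b := Real.rpow_le_rpow h0.le h1 (by norm_num)
    have pow5 : ∀ (W : ℝ), 0 < W → ∀ (n : ℕ),
        W ^ ((n : ℝ) / 5) = (W ^ ((1 : ℝ) / 5)) ^ n := by
      intro W hW n
      rw [← Real.rpow_natCast (W ^ ((1 : ℝ) / 5)) n, ← Real.rpow_mul hW.le]
      norm_num
      ring_nf
    have hm5 : Wm = a ^ 5 := by
      have := pow5 Wm h0 5
      norm_num at this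
      rw [ha_def]; exact this
    have hp5 : Wp = b ^ 5 := by
      have := pow5 Wp hp 5
      norm_num at this
      rw [hb_def]; exact this
    have hm2 : Wm ^ (-(2 : ℝ) / 5) = (a ^ 2)⁻¹ := by
      rw [neg_div, Real.rpow_neg h0.le]
      congr 1
      exact_mod_cast pow5 Wm h0 2
    have hp2 : Wp ^ (-(2 : ℝ) / 5) = (b ^ 2)⁻¹ := by
      rw [neg_div, Real.rpow_neg hp.le]
      congr 1
      exact_mod_cast pow5 Wp hp 2
    have hm7 : Wm ^ ((7 : ℝ) / 5) = a ^ 7 := by exact_mod_cast pow5 Wm h0 7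
    have hp7 : Wp ^ ((7 : ℝ) / 5) = b ^ 7 := by exact_mod_cast pow5 Wp hp 7
    rw [hm2, hp2, hm7, hp7, hm5, hp5]
    have hsub : (a ^ 2)⁻¹ - (b ^ 2)⁻¹ = (b ^ 2 - a ^ 2) / (a ^ 2 * b ^ 2) := by
      field_simp
    rw [div_le_iff₀ (pow_pos hb 5), hsub]
    have h2 : (b ^ 2 - a ^ 2) / (a ^ 2 * b ^ 2) * (b ^ 7 - a ^ 7) * b ^ 5
        = (b ^ 2 - a ^ 2) * (b ^ 7 - a ^ 7) * b ^ 5 / (a ^ 2 * b ^ 2) := by ring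
    rw [h2, le_div_iff₀ (by positivity)]
    nlinarith [mve_key a b ha hab]
  · rw [div_le_div_iff₀ (by linarith) hp]
    nlinarith [mul_nonneg (sq_nonneg (Wp - Wm)) h0.le]
end

section
/- For all real numbers n₊ ≥ n₋ ≥ 0 and T₊ ≥ T₋ > 0, it holds that (n₊ − n₋) · log(T₊/T₋) ≤ ((T₊ − T₋)/(T₊ T₋)) · (n₊ T₊ − n₋ T₋). -/
/-- For `n₊ ≥ n₋ ≥ 0` and `T₊ ≥ T₋ > 0` (`np, nm, Tp, Tm`):
`(n₊ − n₋) log(T₊/T₋) ≤ ((T₊ − T₋)/(T₊T₋)) (n₊T₊ − n₋T₋)`. -/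
theorem spin_flip_I1_estimate (np nm Tp Tm : ℝ) (hn0 : 0 ≤ nm) (hn : nm ≤ np)
    (hT0 : 0 < Tm) (hT : Tm ≤ Tp) :
    (np - nm) * Real.log (Tp / Tm)
      ≤ (Tp - Tm) / (Tp * Tm) * (np * Tp - nm * Tm) := by
  have hTp : 0 < Tp := lt_of_lt_of_le hT0 hT
  have h1 : Real.log (Tp / Tm) ≤ Tp / Tm - 1 :=
    Real.log_le_sub_one_of_pos (div_pos hTp hT0)
  have h2 : (np - nm) * Real.log (Tp / Tm) ≤ (np - nm) * (Tp / Tm - 1) :=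
    mul_le_mul_of_nonneg_left h1 (by linarith)
  refine h2.trans ?_
  rw [div_mul_eq_mul_div, le_div_iff₀ (mul_pos hTp hT0)]
  have key : (np - nm) * (Tp / Tm - 1) * (Tp * Tm) = (np - nm) * (Tp - Tm) * Tp := by
    field_simp
  rw [key]
  nlinarith [mul_nonneg (mul_nonneg (sub_nonneg.2 hn) (sub_nonneg.2 hT)) hTp.le,
    mul_nonneg (mul_nonneg hn0 (sub_nonneg.2 hT)) (sub_nonneg.2 hT)]
end

section
/- For all real numbers n₊, n₋ ≥ 0 and T₊ ≥ T₋ > 0 with n₊ T₊ ≥ n₋ T₋, it holds that (n₊ T₊ − n₋ T₋) · log(T₊/T₋) ≤ ((T₊ − T₋)/(T₊ T₋)) · (n₊ T₊² − n₋ T₋²). -/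
/-- For `n₊, n₋ ≥ 0`, `T₊ ≥ T₋ > 0` with `n₊T₊ ≥ n₋T₋` (`np, nm, Tp, Tm`):
`(n₊T₊ − n₋T₋) log(T₊/T₋) ≤ ((T₊ − T₋)/(T₊T₋)) (n₊T₊² − n₋T₋²)`. -/
theorem spin_flip_I2_estimate (np nm Tp Tm : ℝ) (hnp : 0 ≤ np) (hnm : 0 ≤ nm)
    (hT0 : 0 < Tm) (hT : Tm ≤ Tp) (hnT : nm * Tm ≤ np * Tp) :
    (np * Tp - nm * Tm) * Real.log (Tp / Tm)
      ≤ (Tp - Tm) / (Tp * Tm) * (np * Tp ^ 2 - nm * Tm ^ 2) := by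
  have hTp : 0 < Tp := lt_of_lt_of_le hT0 hT
  have hlog : Real.log (Tp / Tm) ≤ Tp / Tm - 1 :=
    Real.log_le_sub_one_of_pos (div_pos hTp hT0)
  have h1 : (np * Tp - nm * Tm) * Real.log (Tp / Tm)
      ≤ (np * Tp - nm * Tm) * (Tp / Tm - 1) :=
    mul_le_mul_of_nonneg_left hlog (by linarith)
  refine h1.trans ?_
  rw [div_sub_one hT0.ne', div_mul_eq_mul_div, mul_div_assoc', div_le_div_iff₀ hT0 (by positivity)]
  nlinarith [mul_nonneg hnm (mul_nonneg hT0.le (sub_nonneg.2 hT)),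
    mul_nonneg (sub_nonneg.2 hT) (mul_nonneg hnm (mul_nonneg hT0.le (sub_nonneg.2 hT)))]
end

section
/- For all real numbers v₊ ≥ 0 and v₋ ≥ 0, the two-sided estimate ( v₊^{5/7} + v₋^{5/7} )² ≤ ( v₊^{3/7} + v₋^{3/7} )( v₊ + v₋ ) ≤ (12/5) ( v₊^{5/7} + v₋^{5/7} )² holds. Consequently, the function λ(ξ, v₊, v₋) := (5/2) ξ ( v₊^{3/7} + v₋^{3/7} )( v₊ + v₋ ) / ( v₊^{5/7} + v₋^{5/7} )² satisfies (5/2) ξ ≤ λ(ξ, v₊, v₋) ≤ 6 ξ for all ξ ≥ 0 and v₊ ≥ v₋ > 0. -/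
/-- The function `λ(ξ, v₊, v₋)` from the truncated fixed-point formulation of the
time-discrete second spin energy-transport model. -/
noncomputable def lambdaCoeff (ξ vp vm : ℝ) : ℝ :=
  (5 / 2) * ξ * ((vp ^ ((3 : ℝ) / 7) + vm ^ ((3 : ℝ) / 7)) * (vp + vm))
    / (vp ^ ((5 : ℝ) / 7) + vm ^ ((5 : ℝ) / 7)) ^ 2

private lemma rpow_frac (x : ℝ) (hx : 0 ≤ x) (c : ℕ) :
    x ^ ((c : ℝ) / 7) = (x ^ ((1 : ℝ) / 7)) ^ c := by
  rw [← Real.rpow_natCast (x ^ ((1 : ℝ) / 7)) c, ← Real.rpow_mul hx]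
  ring_nf

private lemma poly_ineq (a b : ℝ) (ha : 0 ≤ a) (hb : 0 ≤ b) :
    (a ^ 5 + b ^ 5) ^ 2 ≤ (a ^ 3 + b ^ 3) * (a ^ 7 + b ^ 7) ∧
      (a ^ 3 + b ^ 3) * (a ^ 7 + b ^ 7) ≤ (12 / 5) * (a ^ 5 + b ^ 5) ^ 2 := by
  constructor
  · nlinarith [mul_nonneg (mul_nonneg (pow_nonneg ha 3) (pow_nonneg hb 3))
      (sq_nonneg (a ^ 2 - b ^ 2)), sq_nonneg (a - b)]
  · rcases le_total a b with h | h
    · have h7 := pow_le_pow_left₀ ha h 7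
      have h3 := pow_le_pow_left₀ ha h 3
      nlinarith [mul_nonneg (pow_nonneg ha 5) (pow_nonneg hb 5),
        mul_nonneg (sub_nonneg.2 h7) (sub_nonneg.2 h3)]
    · have h7 := pow_le_pow_left₀ hb h 7
      have h3 := pow_le_pow_left₀ hb h 3
      nlinarith [mul_nonneg (pow_nonneg ha 5) (pow_nonneg hb 5),
        mul_nonneg (sub_nonneg.2 h7) (sub_nonneg.2 h3)]

/-- For `v₊, v₋ ≥ 0`:
`(v₊^{5/7}+v₋^{5/7})² ≤ (v₊^{3/7}+v₋^{3/7})(v₊+v₋) ≤ (12/5)(v₊^{5/7}+v₋^{5/7})²`;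
consequently `(5/2)ξ ≤ λ(ξ,v₊,v₋) ≤ 6ξ` for `ξ ≥ 0` and `v₊ ≥ v₋ > 0`. -/
theorem lambda_bounds :
    (∀ vp vm : ℝ, 0 ≤ vp → 0 ≤ vm →
      (vp ^ ((5 : ℝ) / 7) + vm ^ ((5 : ℝ) / 7)) ^ 2
          ≤ (vp ^ ((3 : ℝ) / 7) + vm ^ ((3 : ℝ) / 7)) * (vp + vm) ∧
      (vp ^ ((3 : ℝ) / 7) + vm ^ ((3 : ℝ) / 7)) * (vp + vm)
          ≤ (12 / 5) * (vp ^ ((5 : ℝ) / 7) + vm ^ ((5 : ℝ) / 7)) ^ 2) ∧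
    (∀ ξ vp vm : ℝ, 0 ≤ ξ → 0 < vm → vm ≤ vp →
      (5 / 2) * ξ ≤ lambdaCoeff ξ vp vm ∧ lambdaCoeff ξ vp vm ≤ 6 * ξ) := by
  have key : ∀ vp vm : ℝ, 0 ≤ vp → 0 ≤ vm →
      (vp ^ ((5 : ℝ) / 7) + vm ^ ((5 : ℝ) / 7)) ^ 2
          ≤ (vp ^ ((3 : ℝ) / 7) + vm ^ ((3 : ℝ) / 7)) * (vp + vm) ∧
      (vp ^ ((3 : ℝ) / 7) + vm ^ ((3 : ℝ) / 7)) * (vp + vm)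
          ≤ (12 / 5) * (vp ^ ((5 : ℝ) / 7) + vm ^ ((5 : ℝ) / 7)) ^ 2 := by
    intro vp vm hp hm
    set a := vp ^ ((1 : ℝ) / 7) with ha'
    set b := vm ^ ((1 : ℝ) / 7) with hb'
    have ha : 0 ≤ a := Real.rpow_nonneg hp _
    have hb : 0 ≤ b := Real.rpow_nonneg hm _
    have h3p : vp ^ ((3 : ℝ) / 7) = a ^ 3 := by
      rw [ha', ← Real.rpow_natCast (vp ^ ((1 : ℝ) / 7)) 3, ← Real.rpow_mul hp]; norm_num
    have h3m : vm ^ ((3 : ℝ) / 7) = b ^ 3 := by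
      rw [hb', ← Real.rpow_natCast (vm ^ ((1 : ℝ) / 7)) 3, ← Real.rpow_mul hm]; norm_num
    have h5p : vp ^ ((5 : ℝ) / 7) = a ^ 5 := by
      rw [ha', ← Real.rpow_natCast (vp ^ ((1 : ℝ) / 7)) 5, ← Real.rpow_mul hp]; norm_num
    have h5m : vm ^ ((5 : ℝ) / 7) = b ^ 5 := by
      rw [hb', ← Real.rpow_natCast (vm ^ ((1 : ℝ) / 7)) 5, ← Real.rpow_mul hm]; norm_num
    have h7p : vp = a ^ 7 := by
      rw [ha', ← Real.rpow_natCast (vp ^ ((1 : ℝ) / 7)) 7, ← Real.rpow_mul hp]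
      norm_num
    have h7m : vm = b ^ 7 := by
      rw [hb', ← Real.rpow_natCast (vm ^ ((1 : ℝ) / 7)) 7, ← Real.rpow_mul hm]
      norm_num
    rw [h3p, h3m, h5p, h5m, h7p, h7m]
    exact poly_ineq a b ha hb
  refine ⟨key, ?_⟩
  intro ξ vp vm hξ hm hmp
  have hp : 0 < vp := lt_of_lt_of_le hm hmp
  obtain ⟨h1, h2⟩ := key vp vm hp.le hm.le
  have hD : 0 < (vp ^ ((5 : ℝ) / 7) + vm ^ ((5 : ℝ) / 7)) ^ 2 := by
    have : 0 < vm ^ ((5 : ℝ) / 7) := Real.rpow_pos_of_pos hm _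
    have h' : 0 < vp ^ ((5 : ℝ) / 7) + vm ^ ((5 : ℝ) / 7) := by
      have := Real.rpow_pos_of_pos hp ((5 : ℝ) / 7); linarith
    positivity
  unfold lambdaCoeff
  constructor
  · rw [le_div_iff₀ hD]
    calc (5 / 2) * ξ * (vp ^ ((5 : ℝ) / 7) + vm ^ ((5 : ℝ) / 7)) ^ 2
        ≤ (5 / 2) * ξ * ((vp ^ ((3 : ℝ) / 7) + vm ^ ((3 : ℝ) / 7)) * (vp + vm)) := by
          apply mul_le_mul_of_nonneg_left h1; positivity
      _ = _ := rfl
  · rw [div_le_iff₀ hD]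
    calc (5 / 2) * ξ * ((vp ^ ((3 : ℝ) / 7) + vm ^ ((3 : ℝ) / 7)) * (vp + vm))
        ≤ (5 / 2) * ξ * ((12 / 5) * (vp ^ ((5 : ℝ) / 7) + vm ^ ((5 : ℝ) / 7)) ^ 2) := by
          apply mul_le_mul_of_nonneg_left h2; positivity
      _ = 6 * ξ * (vp ^ ((5 : ℝ) / 7) + vm ^ ((5 : ℝ) / 7)) ^ 2 := by ring
end

section
/- Let d ≥ 1, let f : ℝ^d → ℝ³ and g : ℝ^d → ℝ be differentiable at a point x₀ ∈ ℝ^d with f(x₀) ≠ 0, and let s := f/|f| (defined near x₀). Then for every direction e ∈ ℝ^d, ⟨ D s(x₀)[e], D(g·f)(x₀)[e] ⟩ = |f(x₀)| g(x₀) · | D s(x₀)[e] |², where g·f denotes the ℝ³-valued function x ↦ g(x) f(x), D(·)(x₀)[e] is the Fréchet derivative at x₀ applied to the direction e, ⟨·,·⟩ is the Euclidean inner product on ℝ³, and |·| the Euclidean norm. -/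
open scoped RealInnerProductSpace

/-- The vector-calculus identity `∇(f/|f|)·∇(g f) = |f| g |∇(f/|f|)|²`: if
`f : ℝ^d → ℝ³` and `g : ℝ^d → ℝ` are differentiable at `x₀` with `f(x₀) ≠ 0`
and `s := f/|f|`, then for every direction `e`,
`⟨Ds(x₀)[e], D(g·f)(x₀)[e]⟩ = |f(x₀)| g(x₀) |Ds(x₀)[e]|²`. -/
theorem deriv_unit_vector_dot_deriv (d : ℕ) (hd : 1 ≤ d)
    (f : EuclideanSpace ℝ (Fin d) → EuclideanSpace ℝ (Fin 3))
    (g : EuclideanSpace ℝ (Fin d) → ℝ) (x₀ : EuclideanSpace ℝ (Fin d))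
    (hf : DifferentiableAt ℝ f x₀) (hg : DifferentiableAt ℝ g x₀)
    (h0 : f x₀ ≠ 0) :
    ∀ e : EuclideanSpace ℝ (Fin d),
      ⟪fderiv ℝ (fun x => ‖f x‖⁻¹ • f x) x₀ e,
          fderiv ℝ (fun x => g x • f x) x₀ e⟫
        = ‖f x₀‖ * g x₀ * ‖fderiv ℝ (fun x => ‖f x‖⁻¹ • f x) x₀ e‖ ^ 2 := by
  intro e
  set s : EuclideanSpace ℝ (Fin d) → EuclideanSpace ℝ (Fin 3) :=
    fun x => ‖f x‖⁻¹ • f x with hs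
  have hn0 : ‖f x₀‖ ≠ 0 := norm_ne_zero_iff.mpr h0
  have hndiff : DifferentiableAt ℝ (fun x => ‖f x‖) x₀ := hf.norm ℝ h0
  have hninv : DifferentiableAt ℝ (fun x => ‖f x‖⁻¹) x₀ := hndiff.inv hn0
  have hsdiff : DifferentiableAt ℝ s x₀ := hninv.smul hf
  -- orthogonality: ⟪Ds e, s x₀⟫ = 0
  have hunit : (fun x => ⟪s x, s x⟫) =ᶠ[nhds x₀] (fun _ => (1:ℝ)) := by
    have hne : ∀ᶠ x in nhds x₀, f x ≠ 0 := hf.continuousAt.eventually_ne h0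
    filter_upwards [hne] with x hx
    have hnx : ‖f x‖ ≠ 0 := norm_ne_zero_iff.mpr hx
    have hns : ‖s x‖ = 1 := by
      rw [hs]
      simp [norm_smul, abs_of_nonneg (inv_nonneg.mpr (norm_nonneg (f x))),
        inv_mul_cancel₀ hnx]
    rw [real_inner_self_eq_norm_sq, hns]
    norm_num
  have hderiv0 : fderiv ℝ (fun x => ⟪s x, s x⟫) x₀ = 0 := by
    rw [hunit.fderiv_eq]; exact fderiv_const_apply 1
  have hinner : fderiv ℝ (fun x => ⟪s x, s x⟫) x₀ e
      = ⟪s x₀, fderiv ℝ s x₀ e⟫ + ⟪fderiv ℝ s x₀ e, s x₀⟫ :=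
    fderiv_inner_apply ℝ hsdiff hsdiff e
  have horth : ⟪fderiv ℝ s x₀ e, s x₀⟫ = 0 := by
    have h1 : ⟪s x₀, fderiv ℝ s x₀ e⟫ + ⟪fderiv ℝ s x₀ e, s x₀⟫ = 0 := by
      rw [← hinner, hderiv0]; simp
    rw [real_inner_comm]
    rw [real_inner_comm (s x₀)] at h1
    linarith
  -- f = ‖f‖ • s everywhere
  have hfeq : f = fun x => ‖f x‖ • s x := by
    funext x
    by_cases hx : f x = 0
    · simp [hs, hx]
    · have : ‖f x‖ ≠ 0 := norm_ne_zero_iff.mpr hx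
      simp [hs, smul_smul, mul_inv_cancel₀ this]
  -- derivative of f via product rule
  have hDf : fderiv ℝ f x₀ e
      = ‖f x₀‖ • fderiv ℝ s x₀ e + (fderiv ℝ (fun x => ‖f x‖) x₀ e) • s x₀ := by
    conv_lhs => rw [hfeq]
    rw [fderiv_fun_smul hndiff hsdiff]
    simp
  -- derivative of g • f via product rule
  have hDgf : fderiv ℝ (fun x => g x • f x) x₀ e
      = g x₀ • fderiv ℝ f x₀ e + (fderiv ℝ g x₀ e) • f x₀ := by
    rw [fderiv_fun_smul hg hf]
    simp
  have hfx : f x₀ = ‖f x₀‖ • s x₀ := by conv_lhs => rw [hfeq]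
  rw [hDgf, hDf, hfx]
  simp only [inner_add_right, real_inner_smul_right, horth,
    real_inner_self_eq_norm_sq]
  ring
end
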